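/- Let q ≥ 2, η > 0, ρ ≥ 0 and define h(s) = (1/q) log(η^q + Σ_n |s_n|^q). Then on the set B̄_{q,ρ} = {s : Σ_n |s_n|^q ≥ ρ^q}, the function s ↦ (χ/2)‖s‖² − (−h(s)) with χ = (q−1)/(η^q + ρ^q)^{2/q} provides a quadratic majorization: for all s₀, s ∈ B̄_{q,ρ}, −h(s) ≤ −h(s₀) − ⟨∇h(s₀), s − s₀⟩ + (χ/2)‖s − s₀‖². (Special case q = 2: the Hessian of −h is bounded above by χ·Id on B̄_{2,ρ}.) -/

import Mathlib

open Real Set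
open scoped RealInnerProductSpace

lemma psi_deriv (η c x : ℝ) (hη : 0 < η) (hc : 0 < c) :
    HasDerivAt (fun x : ℝ => x^2/(2*c) + (1/2)*Real.log (η^2+x^2))
      (x/c + x/(η^2+x^2)) x := by
  have hb : (0:ℝ) < η^2 + x^2 := by positivity
  have h1 : HasDerivAt (fun x : ℝ => x^2/(2*c)) (↑2*x^(2-1)/(2*c)) x :=
    (hasDerivAt_pow 2 x).div_const (2*c)
  have h2 : HasDerivAt (fun x : ℝ => η^2 + x^2) (↑2*x^(2-1)) x :=
    (hasDerivAt_pow 2 x).const_add (η^2)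
  have h3 : HasDerivAt (fun x : ℝ => (1/2)*Real.log (η^2+x^2))
      ((1/2) * ((η^2+x^2)⁻¹ * (↑2*x^(2-1)))) x :=
    ((Real.hasDerivAt_log hb.ne').comp x h2).const_mul (1/2)
  have h4 := h1.add h3
  refine h4.congr_deriv ?_
  field_simp
  ring

lemma psi_deriv2 (η c x : ℝ) (hη : 0 < η) (hc : 0 < c) :
    HasDerivAt (fun x : ℝ => x/c + x/(η^2+x^2))
      (1/c + (η^2 - x^2)/(η^2+x^2)^2) x := by
  have hb : (0:ℝ) < η^2 + x^2 := by positivity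
  have h1 : HasDerivAt (fun x : ℝ => x/c) (1/c) x := (hasDerivAt_id x).div_const c
  have h2 : HasDerivAt (fun x : ℝ => η^2 + x^2) (↑2*x^(2-1)) x :=
    (hasDerivAt_pow 2 x).const_add (η^2)
  have h3 : HasDerivAt (fun x : ℝ => x/(η^2+x^2))
      ((1*(η^2+x^2) - x*(↑2*x^(2-1)))/(η^2+x^2)^2) x := (hasDerivAt_id x).div h2 hb.ne'
  have h4 := h1.add h3
  refine h4.congr_deriv ?_
  field_simp
  ring

lemma psi_convex (η ρ : ℝ) (hη : 0 < η) (hρ : 0 ≤ ρ) :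
    ConvexOn ℝ (Ici ρ)
      (fun x : ℝ => x^2/(2*(η^2+ρ^2)) + (1/2)*Real.log (η^2+x^2)) := by
  have hc : (0:ℝ) < η^2 + ρ^2 := by positivity
  refine convexOn_of_hasDerivWithinAt2_nonneg (convex_Ici ρ) ?_
    (f' := fun x => x/(η^2+ρ^2) + x/(η^2+x^2))
    (f'' := fun x => 1/(η^2+ρ^2) + (η^2 - x^2)/(η^2+x^2)^2) ?_ ?_ ?_
  · intro x _
    exact ((psi_deriv η (η^2+ρ^2) x hη hc).continuousAt).continuousWithinAt
  · intro x _
    exact (psi_deriv η (η^2+ρ^2) x hη hc).hasDerivWithinAt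
  · intro x _
    exact (psi_deriv2 η (η^2+ρ^2) x hη hc).hasDerivWithinAt
  · intro x hx
    rw [interior_Ici] at hx
    have hxρ : ρ < x := hx
    have hx2 : ρ^2 ≤ x^2 := by nlinarith
    have hb : (0:ℝ) < η^2 + x^2 := by positivity
    have key : 0 ≤ (η^2+x^2)^2 + (η^2+ρ^2)*(η^2 - x^2) := by
      nlinarith [hx2, sq_nonneg η, sq_nonneg x, mul_nonneg (sub_nonneg.2 hx2) (sq_nonneg η),
        mul_nonneg (sub_nonneg.2 hx2) (sq_nonneg x)]
    have heq : 1/(η^2+ρ^2) + (η^2 - x^2)/(η^2+x^2)^2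
        = ((η^2+x^2)^2 + (η^2+ρ^2)*(η^2 - x^2))/((η^2+ρ^2)*(η^2+x^2)^2) := by
      field_simp
    show 0 ≤ 1/(η^2+ρ^2) + (η^2 - x^2)/(η^2+x^2)^2
    rw [heq]
    positivity

lemma psi_tangent (η ρ x y : ℝ) (hη : 0 < η) (hρ : 0 ≤ ρ) (hx : ρ ≤ x) (hy : ρ ≤ y) :
    x^2/(2*(η^2+ρ^2)) + (1/2)*Real.log (η^2+x^2)
      + (x/(η^2+ρ^2) + x/(η^2+x^2)) * (y - x)
    ≤ y^2/(2*(η^2+ρ^2)) + (1/2)*Real.log (η^2+y^2) := by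
  have hc : (0:ℝ) < η^2 + ρ^2 := by positivity
  have hconv := psi_convex η ρ hη hρ
  have hd : HasDerivAt (fun x : ℝ => x^2/(2*(η^2+ρ^2)) + (1/2)*Real.log (η^2+x^2))
      (x/(η^2+ρ^2) + x/(η^2+x^2)) x := psi_deriv η (η^2+ρ^2) x hη hc
  rcases lt_trichotomy x y with h | h | h
  · have hs := hconv.le_slope_of_hasDerivAt hx hy h hd
    rw [slope_def_field] at hs
    have hpos : 0 < y - x := by linarith
    rw [le_div_iff₀ hpos] at hs
    linarith
  · subst h; simp
  · have hs := hconv.slope_le_of_hasDerivAt hy hx h hd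
    rw [slope_def_field] at hs
    have hpos : 0 < x - y := by linarith
    rw [div_le_iff₀ hpos] at hs
    linarith

lemma grad_log (N : ℕ) (η : ℝ) (hη : 0 < η) (s₀ : EuclideanSpace ℝ (Fin N)) :
    HasGradientAt (fun z : EuclideanSpace ℝ (Fin N) => (1 / 2) * Real.log (η ^ 2 + ‖z‖ ^ 2))
      ((1 / (η ^ 2 + ‖s₀‖ ^ 2)) • s₀) s₀ := by
  have ha : (0:ℝ) < η ^ 2 + ‖s₀‖ ^ 2 := by positivity
  have h1 : HasFDerivAt (fun z : EuclideanSpace ℝ (Fin N) => ⟪z, z⟫)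
      ((fderivInnerCLM ℝ (s₀, s₀)).comp ((ContinuousLinearMap.id ℝ _).prod
        (ContinuousLinearMap.id ℝ _))) s₀ :=
    (hasFDerivAt_id s₀).inner ℝ (hasFDerivAt_id s₀)
  have h1' : HasFDerivAt (fun z : EuclideanSpace ℝ (Fin N) => η ^ 2 + ⟪z, z⟫)
      ((fderivInnerCLM ℝ (s₀, s₀)).comp ((ContinuousLinearMap.id ℝ _).prod
        (ContinuousLinearMap.id ℝ _))) s₀ := h1.const_add (η ^ 2)
  have hlog : HasDerivAt (fun y : ℝ => (1/2) * Real.log y)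
      ((1/2) * (η ^ 2 + ⟪s₀, s₀⟫)⁻¹) (η ^ 2 + ⟪s₀, s₀⟫) := by
    have : (0:ℝ) < η ^ 2 + ⟪s₀, s₀⟫ := by
      rw [real_inner_self_eq_norm_sq]; exact ha
    exact (Real.hasDerivAt_log this.ne').const_mul (1/2)
  have h2 := hlog.comp_hasFDerivAt s₀ h1'
  have h3 : HasFDerivAt (fun z : EuclideanSpace ℝ (Fin N) => (1 / 2) * Real.log (η ^ 2 + ‖z‖ ^ 2))
      (((1/2) * (η ^ 2 + ⟪s₀, s₀⟫)⁻¹) • ((fderivInnerCLM ℝ (s₀, s₀)).comp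
        ((ContinuousLinearMap.id ℝ _).prod (ContinuousLinearMap.id ℝ _)))) s₀ := by
    refine h2.congr_of_eventuallyEq (Filter.Eventually.of_forall fun z => ?_)
    simp only [Function.comp_apply, real_inner_self_eq_norm_sq]
  rw [hasGradientAt_iff_hasFDerivAt]
  refine h3.congr_fderiv ?_
  symm
  apply ContinuousLinearMap.ext
  intro w
  simp only [InnerProductSpace.toDual_apply_apply, ContinuousLinearMap.smul_apply,
    ContinuousLinearMap.comp_apply, ContinuousLinearMap.prod_apply,
    ContinuousLinearMap.coe_id', id_eq, fderivInnerCLM_apply, real_inner_smul_left,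
    smul_eq_mul]
  rw [real_inner_self_eq_norm_sq, real_inner_comm w s₀]
  ring

theorem majorization_log_q2
    (N : ℕ) (η ρ : ℝ) (hη : 0 < η) (hρ : 0 ≤ ρ) :
    ∀ s₀ s : EuclideanSpace ℝ (Fin N),
      ρ ^ 2 ≤ ‖s₀‖ ^ 2 → ρ ^ 2 ≤ ‖s‖ ^ 2 →
      -((1 / 2) * Real.log (η ^ 2 + ‖s‖ ^ 2)) ≤
        -((1 / 2) * Real.log (η ^ 2 + ‖s₀‖ ^ 2))
        - inner ℝ (gradient (fun z : EuclideanSpace ℝ (Fin N) =>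
            (1 / 2) * Real.log (η ^ 2 + ‖z‖ ^ 2)) s₀) (s - s₀)
        + ((1 / (η ^ 2 + ρ ^ 2)) / 2) * ‖s - s₀‖ ^ 2 := by
  intro s₀ s h₀ h₁
  have ha : (0:ℝ) < η ^ 2 + ‖s₀‖ ^ 2 := by positivity
  have hc : (0:ℝ) < η ^ 2 + ρ ^ 2 := by positivity
  rw [(grad_log N η hη s₀).gradient]
  have hinner : (inner ℝ ((1 / (η ^ 2 + ‖s₀‖ ^ 2)) • s₀) (s - s₀) : ℝ)
      = (⟪s₀, s⟫ - ‖s₀‖ ^ 2) / (η ^ 2 + ‖s₀‖ ^ 2) := by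
    rw [real_inner_smul_left, inner_sub_right, real_inner_self_eq_norm_sq]
    ring
  rw [hinner]
  have hρ₀ : ρ ≤ ‖s₀‖ := by nlinarith [norm_nonneg s₀]
  have hρ₁ : ρ ≤ ‖s‖ := by nlinarith [norm_nonneg s]
  have hCS : ⟪s₀, s⟫ ≤ ‖s₀‖ * ‖s‖ := real_inner_le_norm s₀ s
  have hd : (‖s‖ - ‖s₀‖) ^ 2 ≤ ‖s - s₀‖ ^ 2 := by
    have h := abs_norm_sub_norm_le s s₀
    nlinarith [abs_nonneg (‖s‖ - ‖s₀‖), sq_abs (‖s‖ - ‖s₀‖),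
      mul_self_le_mul_self (abs_nonneg (‖s‖ - ‖s₀‖)) h]
  have htan := psi_tangent η ρ ‖s₀‖ ‖s‖ hη hρ hρ₀ hρ₁
  have e1 : (⟪s₀, s⟫ - ‖s₀‖ ^ 2) / (η ^ 2 + ‖s₀‖ ^ 2)
      ≤ ‖s₀‖ * (‖s‖ - ‖s₀‖) / (η ^ 2 + ‖s₀‖ ^ 2) := by
    gcongr
    nlinarith [hCS]
  have e2 : (‖s‖ - ‖s₀‖) ^ 2 / (2 * (η ^ 2 + ρ ^ 2)) ≤ ‖s - s₀‖ ^ 2 / (2 * (η ^ 2 + ρ ^ 2)) := by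
    gcongr
  have e3 : ((1 / (η ^ 2 + ρ ^ 2)) / 2) * ‖s - s₀‖ ^ 2 = ‖s - s₀‖ ^ 2 / (2 * (η ^ 2 + ρ ^ 2)) := by
    field_simp
  rw [e3]
  have e4 : ‖s₀‖ * (‖s‖ - ‖s₀‖) / (η ^ 2 + ‖s₀‖ ^ 2)
      = (‖s₀‖ / (η ^ 2 + ρ ^ 2) + ‖s₀‖ / (η ^ 2 + ‖s₀‖ ^ 2)) * (‖s‖ - ‖s₀‖)
        - ‖s₀‖ * (‖s‖ - ‖s₀‖) / (η ^ 2 + ρ ^ 2) := by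
    field_simp
    ring
  have e5 : (‖s‖ - ‖s₀‖) ^ 2 / (2 * (η ^ 2 + ρ ^ 2))
      = ‖s‖ ^ 2 / (2 * (η ^ 2 + ρ ^ 2)) - ‖s₀‖ ^ 2 / (2 * (η ^ 2 + ρ ^ 2))
        - ‖s₀‖ * (‖s‖ - ‖s₀‖) / (η ^ 2 + ρ ^ 2) := by
    field_simp
    ring
  linarith [htan, e1, e2]
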